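/- Let k be a field and let φ : k[[x,y,z]] → k[[s,t]] be the continuous k-algebra homomorphism of formal power series rings determined by x ↦ s², y ↦ st, z ↦ t² (i.e. the substitution homomorphism sending a power series f(x,y,z) to f(s², st, t²)). Then the kernel of φ is the principal ideal generated by xz − y²; in particular ker φ ⊆ m², where m is the maximal ideal of k[[x,y,z]]. -/

import Mathlib

open CategoryTheory

noncomputable section

/-- The Ext group `Ext_R^n(M, N)`. -/
def extGroup (R : Type) [CommRing R] (M N : ModuleCat R) (n : ℕ) : ModuleCat R :=
  ((Ext R (ModuleCat R) n).obj (Opposite.op M)).obj N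

/-- Projective dimension of a module, as an element of `ℕ∞`,
characterized by vanishing of `Ext` in higher degrees. -/
def projDim (R : Type) [CommRing R] (M : ModuleCat R) : ℕ∞ :=
  sInf {n : ℕ∞ | ∀ i : ℕ, n < (i : ℕ∞) → ∀ N : ModuleCat R, Subsingleton (extGroup R M N i)}

/-- The Tor group `Tor^R_n(M, N)`, derived in the second variable. -/
def torGroup (R : Type) [CommRing R] (M N : ModuleCat R) (n : ℕ) : ModuleCat R :=
  ((Tor (ModuleCat R) n).obj M).obj N

/-- Flat dimension of a module, as an element of `ℕ∞`,
characterized by vanishing of `Tor` in higher degrees. -/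
def flatDim (R : Type) [CommRing R] (N : ModuleCat R) : ℕ∞ :=
  sInf {n : ℕ∞ | ∀ i : ℕ, n < (i : ℕ∞) → ∀ X : ModuleCat R, Subsingleton (torGroup R X N i)}

/-- The embedding dimension of a local ring: `dim_k m/m²`. -/
def edim (A : Type) [CommRing A] [IsLocalRing A] : ℕ :=
  Module.finrank (IsLocalRing.ResidueField A) (IsLocalRing.CotangentSpace A)

/-- Depth of a module over a local ring: supremum of lengths of regular
sequences contained in the maximal ideal. -/
def sdepth (A : Type) [CommRing A] [IsLocalRing A]
    (M : Type) [AddCommGroup M] [Module A M] : ℕ∞ :=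
  sSup {n : ℕ∞ | ∃ rs : List A, (rs.length : ℕ∞) = n ∧
    (∀ x ∈ rs, x ∈ IsLocalRing.maximalIdeal A) ∧ RingTheory.Sequence.IsRegular M rs}

/-- The images of the elements of `rs` in `m/m²` are linearly independent
over the residue field. -/
def LinIndepInCotangent (A : Type) [CommRing A] [IsLocalRing A] (rs : List A) : Prop :=
  ∃ h : ∀ x ∈ rs, x ∈ IsLocalRing.maximalIdeal A,
    LinearIndependent (IsLocalRing.ResidueField A)
      fun i : Fin rs.length =>
        (IsLocalRing.maximalIdeal A).toCotangent ⟨rs.get i, h _ (List.get_mem rs i)⟩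

/-- The kernel of `φ` is generated by an `A`-regular sequence whose images in
`m_A/m_A²` are linearly independent over the residue field; i.e. `φ` is a
surjective exceptional complete intersection. -/
def IsEceKernel {A B : Type} [CommRing A] [IsLocalRing A] [CommRing B] (φ : A →+* B) : Prop :=
  ∃ rs : List A, RingTheory.Sequence.IsRegular A rs ∧ Ideal.ofList rs = RingHom.ker φ ∧
    LinIndepInCotangent A rs

end

noncomputable section

/-- The Krull dimension of a ring, as an element of `WithBot ℕ∞`. -/
def kdim (R : Type) [CommRing R] : WithBot ℕ∞ := ringKrullDim R

/-- A Noetherian local ring is regular if its Krull dimension equals its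
embedding dimension. -/
def IsRegularLocal (R : Type) [CommRing R] [IsLocalRing R] : Prop :=
  IsNoetherianRing R ∧ kdim R = (edim R : WithBot ℕ∞)

end

/-!
Dividing by `y² - xz`, which is monic of degree two in `y`, writes every `f` as
`(y² - xz) q + r` with `r` of degree at most one in `y`. The substitution sends `x^a y^b z^c`
to `s^(2a+b) t^(b+2c)`, which is injective on monomials with `b ≤ 1`, so `φ r = 0` forces
`r = 0`. As `φ` is only given as an algebra homomorphism, it must first be shown to be
continuous: it preserves constant coefficients, hence does not lower the order, so each
coefficient of `φ f` only depends on a truncation of `f`.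
-/

namespace MvPowerSeries

open Finsupp

variable {σ τ k : Type*} [Field k]

theorem coeff_X_mul' {R : Type*} [CommSemiring R] (i : σ) (g : MvPowerSeries σ R) (d : σ →₀ ℕ) :
    coeff d (X i * g) = if single i 1 ≤ d then coeff (d - single i 1) g else 0 := by
  rw [X, coeff_monomial_mul, one_mul]

theorem exists_eq_sum_X_mul [Fintype σ] {R : Type*} [CommSemiring R] {f : MvPowerSeries σ R}
    {K : ℕ} (hf : ((K + 1 : ℕ) : ℕ∞) ≤ f.order) :
    ∃ g : σ → MvPowerSeries σ R, f = ∑ i, X i * g i ∧ ∀ i, (K : ℕ∞) ≤ (g i).order := by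
  classical
  let : LinearOrder σ := LinearOrder.lift' _ (Fintype.equivFin σ).injective
  -- each monomial is attributed to the smallest variable it contains
  let g : σ → MvPowerSeries σ R := fun i e =>
    if ∀ j < i, e j = 0 then coeff (e + single i 1) f else 0
  have hg : ∀ i e, coeff e (g i) = if ∀ j < i, e j = 0 then coeff (e + single i 1) f else 0 :=
    fun _ _ => rfl
  refine ⟨g, ?_, fun i => le_order fun e he => ?_⟩
  · ext d
    have hterm : ∀ i, coeff d (X i * g i) =
        if d i ≠ 0 ∧ ∀ j < i, d j = 0 then coeff d f else 0 := by
      intro i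
      rw [coeff_X_mul']
      by_cases hdi : d i = 0
      · rw [if_neg (by simpa [single_le_iff] using hdi), if_neg (by simp [hdi])]
      · have hle : single i 1 ≤ d := single_le_iff.mpr (by omega)
        have hlt : (∀ j < i, (d - single i 1 : σ →₀ ℕ) j = 0) ↔ ∀ j < i, d j = 0 :=
          forall₂_congr fun j hj => by simp [hj.ne']
        rw [if_pos hle, hg, tsub_add_cancel_of_le hle]
        simp only [hlt, ne_eq, hdi, not_false_eq_true, true_and]
    rw [map_sum, Finset.sum_congr rfl fun i _ => hterm i]
    rcases eq_or_ne d 0 with rfl | hd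
    · have h0 : coeff 0 f = 0 :=
        coeff_of_lt_order (by simpa using hf.trans_lt' (by norm_cast; omega))
      simp [h0]
    · have hsupp : d.support.Nonempty := support_nonempty_iff.mpr hd
      set i₀ := d.support.min' hsupp
      have hi₀ : d i₀ ≠ 0 := mem_support_iff.mp (d.support.min'_mem hsupp)
      have hbelow : ∀ j < i₀, d j = 0 := fun j hj =>
        notMem_support_iff.mp fun hmem => (d.support.min'_le j hmem).not_gt hj
      rw [Finset.sum_eq_single i₀, if_pos ⟨hi₀, hbelow⟩]
      · rintro i - hne
        refine if_neg fun ⟨hdi, hlt⟩ => hne (le_antisymm ?_ (d.support.min'_le i ?_))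
        · exact not_lt.mp fun h => hi₀ (hlt i₀ h)
        · exact mem_support_iff.mpr hdi
      · simp
  · rw [hg]
    split_ifs
    · refine coeff_of_lt_order (lt_of_lt_of_le ?_ hf)
      rw [map_add, degree_single]
      exact_mod_cast Nat.add_lt_add_right (by exact_mod_cast he) 1
    · rfl

theorem X_mem_maximalIdeal {R : Type*} [CommRing R] [IsLocalRing R] (i : σ) :
    X i ∈ IsLocalRing.maximalIdeal (MvPowerSeries σ R) := by
  rw [IsLocalRing.mem_maximalIdeal, mem_nonunits_iff, isUnit_iff_constantCoeff, constantCoeff_X]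
  exact not_isUnit_zero

theorem constantCoeff_algHom_apply (φ : MvPowerSeries σ k →ₐ[k] MvPowerSeries τ k)
    (f : MvPowerSeries σ k) : constantCoeff (φ f) = constantCoeff f := by
  have hφC : ∀ a : k, φ (C a) = C a := fun a => by
    rw [c_eq_algebraMap, c_eq_algebraMap, φ.commutes]
  set g := f - C (constantCoeff f) with hg
  have hg0 : constantCoeff g = 0 := by simp [hg]
  suffices hφg : constantCoeff (φ g) = 0 by
    rwa [hg, map_sub, hφC, map_sub, constantCoeff_C, sub_eq_zero] at hφg
  by_contra he
  -- otherwise `g - e`, for `e` the constant coefficient of `φ g`, is a unit with image a non-unit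
  have hunit : IsUnit (g - C (constantCoeff (φ g))) := by
    rwa [isUnit_iff_constantCoeff, map_sub, hg0, constantCoeff_C, zero_sub, isUnit_iff_ne_zero,
      neg_ne_zero]
  have := hunit.map φ
  rw [isUnit_iff_constantCoeff, map_sub, hφC, map_sub, constantCoeff_C, sub_self] at this
  exact not_isUnit_zero this

theorem le_order_algHom_apply [Fintype σ] (φ : MvPowerSeries σ k →ₐ[k] MvPowerSeries τ k)
    (f : MvPowerSeries σ k) : f.order ≤ (φ f).order := by
  rw [← ENat.forall_natCast_le_iff_le]
  intro K
  induction K generalizing f with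
  | zero => simp
  | succ K ih =>
    intro hf
    obtain ⟨g, rfl, hg⟩ := exists_eq_sum_X_mul hf
    refine le_order fun d hd => ?_
    rw [map_sum, map_sum]
    refine Finset.sum_eq_zero fun i _ => coeff_of_lt_order (lt_of_lt_of_le hd ?_)
    have hX : 1 ≤ (φ (X i)).order := by
      rw [one_le_order_iff_constCoeff_eq_zero, constantCoeff_algHom_apply, constantCoeff_X]
    calc ((K + 1 : ℕ) : ℕ∞) = 1 + K := by push_cast; ring
      _ ≤ (φ (X i)).order + (φ (g i)).order := add_le_add hX (ih _ (hg i))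
      _ ≤ _ := by rw [map_mul]; exact le_order_mul

theorem coeff_algHom_apply_truncTotal [Fintype σ] (φ : MvPowerSeries σ k →ₐ[k] MvPowerSeries τ k)
    (f : MvPowerSeries σ k) {E : τ →₀ ℕ} {K : ℕ} (hK : E.degree < K) :
    coeff E (φ (truncTotal K f)) = coeff E (φ f) := by
  rw [← sub_eq_zero, ← map_sub, ← map_sub]
  refine coeff_of_lt_order (lt_of_lt_of_le ?_ (le_order_algHom_apply φ _))
  refine lt_of_lt_of_le (by exact_mod_cast hK) (nat_le_order fun d hd => ?_)
  rw [map_sub, MvPolynomial.coeff_coe, coeff_truncTotal _ hd, sub_self]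

theorem algHom_monomial {v : σ → τ →₀ ℕ} (φ : MvPowerSeries σ k →ₐ[k] MvPowerSeries τ k)
    (hφ : ∀ i, φ (X i) = monomial (v i) 1) (d : σ →₀ ℕ) (a : k) :
    φ (monomial d a) = monomial (linearCombination ℕ v d) a := by
  induction d using Finsupp.induction with
  | zero =>
    rw [map_zero, monomial_zero_eq_C_apply, c_eq_algebraMap, φ.commutes, ← c_eq_algebraMap,
      monomial_zero_eq_C_apply]
  | single_add i n d _ _ ih =>
    rw [← one_mul a, ← monomial_mul_monomial, ← X_pow_eq, map_mul, map_pow, hφ, ih,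
      monomial_pow, one_pow, monomial_mul_monomial, map_add, linearCombination_single]

theorem eq_zero_of_algHom_apply_eq_zero [Fintype σ] {v : σ → τ →₀ ℕ}
    (φ : MvPowerSeries σ k →ₐ[k] MvPowerSeries τ k) (hφ : ∀ i, φ (X i) = monomial (v i) 1)
    {f : MvPowerSeries σ k} (hinj : Set.InjOn (linearCombination ℕ v) {d | coeff d f ≠ 0})
    (hf : φ f = 0) : f = 0 := by
  classical
  ext d
  by_contra hd
  set E := linearCombination ℕ v d
  set p := truncTotal (E.degree + d.degree + 1) f
  have hpd : p.coeff d = coeff d f := coeff_truncTotal _ (by omega)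
  have hp : ∀ d', p.coeff d' ≠ 0 → coeff d' f ≠ 0 := fun d' h h' => by
    simp [p, coeff_truncTotal_eq_ite, h'] at h
  have hcoe : (p : MvPowerSeries σ k) = ∑ d' ∈ p.support, monomial d' (p.coeff d') := by
    conv_lhs => rw [p.as_sum]
    rw [← MvPolynomial.coeToMvPowerSeries.ringHom_apply, map_sum]
    simp only [MvPolynomial.coeToMvPowerSeries.ringHom_apply, MvPolynomial.coe_monomial]
  have : coeff E (φ p) = p.coeff d := by
    simp only [hcoe, map_sum, algHom_monomial φ hφ, coeff_monomial]
    refine (Finset.sum_eq_single d (fun d' hd' hne => if_neg fun h => hne ?_) fun h => ?_).trans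
      (if_pos rfl)
    · exact hinj (hp _ (MvPolynomial.mem_support_iff.mp hd')) hd h.symm
    · rw [MvPolynomial.notMem_support_iff.mp h, ite_self]
  rw [coeff_algHom_apply_truncTotal φ f (by omega), hf, map_zero, hpd] at this
  exact hd this.symm

end MvPowerSeries

namespace VeroneseCone

open MvPowerSeries Finsupp Finset

variable {R : Type*} [CommRing R]

noncomputable def triple (a b c : ℕ) : Fin 3 →₀ ℕ := single 0 a + single 1 b + single 2 c

@[simp] theorem triple_apply_zero (a b c : ℕ) : triple a b c 0 = a := by simp [triple]
@[simp] theorem triple_apply_one (a b c : ℕ) : triple a b c 1 = b := by simp [triple]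
@[simp] theorem triple_apply_two (a b c : ℕ) : triple a b c 2 = c := by simp [triple]

theorem triple_eta (d : Fin 3 →₀ ℕ) : triple (d 0) (d 1) (d 2) = d := by
  ext i; fin_cases i <;> simp

theorem triple_le_triple {a b c a' b' c' : ℕ} :
    triple a' b' c' ≤ triple a b c ↔ a' ≤ a ∧ b' ≤ b ∧ c' ≤ c := by
  refine ⟨fun h => ⟨by simpa using h 0, by simpa using h 1, by simpa using h 2⟩, ?_⟩
  rintro ⟨ha, hb, hc⟩ i
  fin_cases i <;> simpa

theorem triple_sub_triple (a b c a' b' c' : ℕ) :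
    triple a b c - triple a' b' c' = triple (a - a') (b - b') (c - c') := by
  ext i; fin_cases i <;> simp

theorem coeff_monomial_triple_mul (a b c a' b' c' : ℕ) (r : R) (q : MvPowerSeries (Fin 3) R) :
    coeff (triple a b c) (monomial (triple a' b' c') r * q) =
      if a' ≤ a ∧ b' ≤ b ∧ c' ≤ c then r * coeff (triple (a - a') (b - b') (c - c')) q else 0 := by
  rw [coeff_monomial_mul, triple_sub_triple]
  exact if_congr triple_le_triple rfl rfl

-- `y^b = (y² - xz) ∑_{2u+2 ≤ b} (xz)^u y^(b-2-2u) + (xz)^⌊b/2⌋ y^(b mod 2)`, applied to each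
-- monomial of `f`
noncomputable def divQuot (f : MvPowerSeries (Fin 3) R) : MvPowerSeries (Fin 3) R :=
  fun e => ∑ u ∈ range (min (e 0) (e 2) + 1), coeff (triple (e 0 - u) (e 1 + 2 + 2 * u) (e 2 - u)) f

theorem coeff_triple_divQuot (f : MvPowerSeries (Fin 3) R) (a b c : ℕ) :
    coeff (triple a b c) (divQuot f) =
      ∑ u ∈ range (min a c + 1), coeff (triple (a - u) (b + 2 + 2 * u) (c - u)) f := by
  change ∑ u ∈ range (min (triple a b c 0) (triple a b c 2) + 1),
    coeff (triple (triple a b c 0 - u) (triple a b c 1 + 2 + 2 * u) (triple a b c 2 - u)) f = _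
  simp only [triple_apply_zero, triple_apply_one, triple_apply_two]

theorem coeff_mul_divQuot (f : MvPowerSeries (Fin 3) R) {d : Fin 3 →₀ ℕ} (hd : 2 ≤ d 1) :
    coeff d ((X 1 ^ 2 - X 0 * X 2) * divQuot f) = coeff d f := by
  obtain ⟨a, b, c, rfl⟩ : ∃ a b c, d = triple a (b + 2) c :=
    ⟨d 0, d 1 - 2, d 2, by rw [Nat.sub_add_cancel hd, triple_eta]⟩
  have hY : (X 1 ^ 2 : MvPowerSeries (Fin 3) R) = monomial (triple 0 2 0) 1 := by
    rw [X_pow_eq, show triple 0 2 0 = single 1 2 by ext i; fin_cases i <;> simp [triple]]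
  have hXZ : (X 0 * X 2 : MvPowerSeries (Fin 3) R) = monomial (triple 1 0 1) 1 := by
    rw [X, X, monomial_mul_monomial, one_mul,
      show triple 1 0 1 = single 0 1 + single 2 1 by ext i; fin_cases i <;> simp [triple]]
  rw [sub_mul, map_sub, hY, hXZ, coeff_monomial_triple_mul, coeff_monomial_triple_mul,
    if_pos (by omega), one_mul, coeff_triple_divQuot]
  simp only [Nat.sub_zero, Nat.add_sub_cancel, zero_le, true_and, one_mul]
  rcases a with _ | a
  · simp
  rcases c with _ | c
  · simp
  rw [if_pos (by omega), coeff_triple_divQuot, min_add_add_right, sum_range_succ',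
    sub_eq_iff_eq_add, add_comm]
  congr 1
  refine sum_congr rfl fun u _ => ?_
  congr 3 <;> omega

theorem exists_eq_mul_add (f : MvPowerSeries (Fin 3) R) :
    ∃ q r : MvPowerSeries (Fin 3) R,
      f = (X 1 ^ 2 - X 0 * X 2) * q + r ∧ ∀ d, coeff d r ≠ 0 → d 1 < 2 := by
  refine ⟨divQuot f, f - (X 1 ^ 2 - X 0 * X 2) * divQuot f, by ring, fun d hd => ?_⟩
  by_contra! h
  rw [map_sub, coeff_mul_divQuot f h, sub_self] at hd
  exact hd rfl

noncomputable def veroneseExp : Fin 3 → Fin 2 →₀ ℕ :=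
  ![single 0 2, single 0 1 + single 1 1, single 1 2]

theorem algHom_X_eq_monomial_veroneseExp {k : Type*} [Field k]
    (φ : MvPowerSeries (Fin 3) k →ₐ[k] MvPowerSeries (Fin 2) k) (hx : φ (X 0) = X 0 ^ 2)
    (hy : φ (X 1) = X 0 * X 1) (hz : φ (X 2) = X 1 ^ 2) (i : Fin 3) :
    φ (X i) = monomial (veroneseExp i) 1 := by
  fin_cases i
  · simp [hx, X_pow_eq, veroneseExp]
  · change φ (X 1) = monomial (single 0 1 + single 1 1) 1
    rw [hy, X, X, monomial_mul_monomial, one_mul]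
  · simp [hz, X_pow_eq, veroneseExp]

theorem linearCombination_veroneseExp_apply (d : Fin 3 →₀ ℕ) :
    linearCombination ℕ veroneseExp d 0 = 2 * d 0 + d 1 ∧
      linearCombination ℕ veroneseExp d 1 = d 1 + 2 * d 2 := by
  rw [linearCombination_apply, sum_fintype _ _ (by simp)]
  simp [Fin.sum_univ_three, veroneseExp, mul_comm]

theorem injOn_linearCombination_veroneseExp :
    Set.InjOn (linearCombination ℕ veroneseExp) {d | d 1 < 2} := by
  intro d (hd : d 1 < 2) d' (hd' : d' 1 < 2) h
  have h0 := congr($h 0)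
  have h1 := congr($h 1)
  rw [(linearCombination_veroneseExp_apply d).1, (linearCombination_veroneseExp_apply d').1] at h0
  rw [(linearCombination_veroneseExp_apply d).2, (linearCombination_veroneseExp_apply d').2] at h1
  ext i
  fin_cases i <;> simp <;> omega

end VeroneseCone

/-- Example 2.14: the kernel of the substitution homomorphism
`k[[x,y,z]] → k[[s,t]]`, `x ↦ s²`, `y ↦ st`, `z ↦ t²`, is `(xz - y²) ⊆ m²`.
(Any `k`-algebra homomorphism of these power series rings is uniquely determined
by the images of the variables, so it is quantified universally.) -/
theorem statement_17 (k : Type) [Field k]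
    (φ : MvPowerSeries (Fin 3) k →ₐ[k] MvPowerSeries (Fin 2) k)
    (hx : φ (MvPowerSeries.X 0) = MvPowerSeries.X 0 ^ 2)
    (hy : φ (MvPowerSeries.X 1) = MvPowerSeries.X 0 * MvPowerSeries.X 1)
    (hz : φ (MvPowerSeries.X 2) = MvPowerSeries.X 1 ^ 2) :
    RingHom.ker φ =
      Ideal.span {(MvPowerSeries.X 0 * MvPowerSeries.X 2 - MvPowerSeries.X 1 ^ 2 :
        MvPowerSeries (Fin 3) k)} ∧
    RingHom.ker φ ≤ (IsLocalRing.maximalIdeal (MvPowerSeries (Fin 3) k)) ^ 2 := by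
  have hφ := VeroneseCone.algHom_X_eq_monomial_veroneseExp φ hx hy hz
  open MvPowerSeries in
  have hgen : φ (X 0 * X 2 - X 1 ^ 2) = 0 := by
    rw [map_sub, map_mul, map_pow, hx, hy, hz]
    ring
  open MvPowerSeries VeroneseCone in
  have hker : RingHom.ker φ = Ideal.span {X 0 * X 2 - X 1 ^ 2} := by
    refine le_antisymm (fun f hf => ?_) ((Ideal.span_singleton_le_iff_mem _).mpr hgen)
    obtain ⟨q, r, rfl, hr⟩ := exists_eq_mul_add f
    have hr0 : r = 0 := by
      refine eq_zero_of_algHom_apply_eq_zero φ hφ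
        (injOn_linearCombination_veroneseExp.mono hr) ?_
      rwa [RingHom.mem_ker, map_add, map_mul, ← neg_sub, map_neg, hgen, neg_zero, zero_mul,
        zero_add] at hf
    rw [hr0, add_zero, Ideal.mem_span_singleton]
    exact ⟨-q, by ring⟩
  refine ⟨hker, ?_⟩
  rw [hker, Ideal.span_singleton_le_iff_mem, pow_two]
  open MvPowerSeries in
  exact sub_mem (Ideal.mul_mem_mul (X_mem_maximalIdeal 0) (X_mem_maximalIdeal 2))
    (sq (X 1 : MvPowerSeries (Fin 3) k) ▸
      Ideal.mul_mem_mul (X_mem_maximalIdeal 1) (X_mem_maximalIdeal 1))
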